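/- arXiv:2407.11688 — 2 statements merged into one kernel-verified Lean document; each statement's English description precedes it below -/
import Mathlib

section
/- Let z₁, z₂ be nonzero complex numbers with |z₁| ≤ |z₂| and |arg(z₁/z₂)| ≥ η for some η ∈ [0, π]. Then |z₁ + z₂| ≤ (1 - η²/8)·|z₁| + |z₂|. -/
set_option maxHeartbeats 1000000

open Real

/-- Key cosine upper bound: `cos η ≤ 1 - η²/4 + η⁴/128` on `[0, π]`. -/
lemma aux_cos_bound (η : ℝ) (h0 : 0 ≤ η) (hπ : η ≤ Real.pi) :
    Real.cos η ≤ 1 - η ^ 2 / 4 + η ^ 4 / 128 := by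
  rcases eq_or_lt_of_le h0 with rfl | hpos
  · simp
  by_cases hsmall : η ^ 2 ≤ 6.1
  · -- small case: quarter-angle argument
    have hq1 : η / 4 ≤ 1 := by nlinarith
    have hs4 : η / 4 - (η / 4) ^ 3 / 4 < Real.sin (η / 4) :=
      by
        have := Real.sin_gt_sub_cube (x := η / 4) (by positivity)
        have h3 : 0 < (η / 4) ^ 3 := by positivity
        linarith
    have hc4 : 1 - (η / 4) ^ 2 / 2 ≤ Real.cos (η / 4) :=
      Real.one_sub_sq_div_two_le_cos
    have hs4nn : 0 ≤ η / 4 - (η / 4) ^ 3 / 4 := by nlinarith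
    have hc4nn : (0:ℝ) ≤ 1 - (η / 4) ^ 2 / 2 := by nlinarith
    have hsin2 : Real.sin (η / 2) = 2 * Real.sin (η / 4) * Real.cos (η / 4) := by
      rw [show η / 2 = 2 * (η / 4) by ring, Real.sin_two_mul]
    have hcos : Real.cos η = 1 - 2 * Real.sin (η / 2) ^ 2 := by
      have := Real.sin_sq_eq_half_sub (η / 2)
      rw [show 2 * (η / 2) = η by ring] at this
      linarith
    have hprod : (η / 4 - (η / 4) ^ 3 / 4) * (1 - (η / 4) ^ 2 / 2)
        ≤ Real.sin (η / 4) * Real.cos (η / 4) := by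
      have hsnn : 0 ≤ Real.sin (η / 4) := le_trans hs4nn hs4.le
      exact mul_le_mul hs4.le hc4 hc4nn hsnn
    have hlow : 0 ≤ (η / 4 - (η / 4) ^ 3 / 4) * (1 - (η / 4) ^ 2 / 2) :=
      mul_nonneg hs4nn hc4nn
    have hsq : ((η / 4 - (η / 4) ^ 3 / 4) * (1 - (η / 4) ^ 2 / 2)) ^ 2
        ≤ (Real.sin (η / 4) * Real.cos (η / 4)) ^ 2 :=
      pow_le_pow_left₀ hlow hprod 2
    -- polynomial estimate
    have e1 : 1 - η^2/32 ≤ (1 - η^2/64)^2 := by nlinarith [sq_nonneg (η^2/64)]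
    have e2 : 1 - η^2/16 ≤ (1 - η^2/32)^2 := by nlinarith [sq_nonneg (η^2/32)]
    have e4 : (1 - η^2/32) * (1 - η^2/16) ≤ (1 - η^2/64)^2 * (1 - η^2/32)^2 :=
      mul_le_mul e1 e2 (by nlinarith) (sq_nonneg _)
    have e5 : 1/2 - η^2/64 ≤ (1 - η^2/32) * (1 - η^2/16) := by nlinarith
    have e6 : 1/2 - η^2/64 ≤ (1 - η^2/64)^2 * (1 - η^2/32)^2 := e5.trans e4
    have key : η^2/4 - η^4/128 ≤ (η^2/2) * ((1 - η^2/64)^2 * (1 - η^2/32)^2) := by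
      nlinarith [mul_le_mul_of_nonneg_left e6 (by positivity : (0:ℝ) ≤ η^2/2)]
    have hLsq : 8 * ((η / 4 - (η / 4) ^ 3 / 4) * (1 - (η / 4) ^ 2 / 2)) ^ 2
        = (η^2/2) * ((1 - η^2/64)^2 * (1 - η^2/32)^2) := by ring
    have hexp : (2 * Real.sin (η / 4) * Real.cos (η / 4)) ^ 2
        = 4 * (Real.sin (η / 4) * Real.cos (η / 4)) ^ 2 := by ring
    rw [hcos, hsin2, hexp]
    linarith [hsq, key, hLsq]
  · -- large case: Jordan's inequality
    push_neg at hsmall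
    have hjord : Real.cos η ≤ 1 - 2 / Real.pi ^ 2 * η ^ 2 :=
      Real.cos_le_one_sub_mul_cos_sq (by rwa [abs_of_nonneg h0])
    have hpi2 : Real.pi ^ 2 < 9.8697 := by
      nlinarith [Real.pi_lt_d6, Real.pi_gt_three]
    have hpi2pos : (0:ℝ) < Real.pi ^ 2 := by positivity
    have hdiv : 2 / 9.8697 ≤ 2 / Real.pi ^ 2 := by
      rw [div_le_div_iff₀ (by norm_num) hpi2pos]
      nlinarith
    have hmul : 2 / 9.8697 * η ^ 2 ≤ 2 / Real.pi ^ 2 * η ^ 2 :=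
      mul_le_mul_of_nonneg_right hdiv (sq_nonneg η)
    have h4 : 6.1 * η^2 ≤ η^4 := by nlinarith [sq_nonneg η]
    nlinarith [hjord, hmul, h4]

theorem stmt0 (z₁ z₂ : ℂ) (h₁ : z₁ ≠ 0) (h₂ : z₂ ≠ 0) (η : ℝ)
    (hη : η ∈ Set.Icc 0 Real.pi)
    (hle : ‖z₁‖ ≤ ‖z₂‖)
    (harg : η ≤ |Complex.arg (z₁ / z₂)|) :
    ‖z₁ + z₂‖ ≤ (1 - η ^ 2 / 8) * ‖z₁‖ + ‖z₂‖ := by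
  obtain ⟨hη0, hηπ⟩ := hη
  set r := ‖z₁‖ with hr_def
  set s := ‖z₂‖ with hs_def
  have hr : 0 < r := norm_pos_iff.mpr h₁
  have hs : 0 < s := norm_pos_iff.mpr h₂
  set θ := Complex.arg (z₁ / z₂) with hθ_def
  have hw : z₁ / z₂ ≠ 0 := div_ne_zero h₁ h₂
  -- cos θ ≤ cos η ≤ bound
  have habsθ : |θ| ≤ Real.pi := Complex.abs_arg_le_pi _
  have hcosθη : Real.cos θ ≤ Real.cos η := by
    rw [← Real.cos_abs]
    exact Real.cos_le_cos_of_nonneg_of_le_pi hη0 habsθ harg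
  have hC : Real.cos θ ≤ 1 - η ^ 2 / 4 + η ^ 4 / 128 :=
    hcosθη.trans (aux_cos_bound η hη0 hηπ)
  -- |z₁+z₂|² = r² + s² + 2 r s cos θ
  have hre : (z₁ * (starRingEnd ℂ) z₂).re = r * s * Real.cos θ := by
    have hmul : z₁ * (starRingEnd ℂ) z₂ = (z₁ / z₂) * (Complex.normSq z₂ : ℂ) := by
      rw [← Complex.mul_conj]
      field_simp
    have hcos : Real.cos θ = (z₁ / z₂).re / ‖z₁ / z₂‖ :=
      Complex.cos_arg hw
    have habs : ‖z₁ / z₂‖ = r / s := norm_div _ _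
    have hre2 : (z₁ / z₂).re = Real.cos θ * (r / s) := by
      rw [hcos, habs]
      field_simp
    rw [hmul, Complex.mul_re, Complex.ofReal_re, Complex.ofReal_im, hre2,
      Complex.normSq_eq_norm_sq]
    rw [← hs_def]
    field_simp
    ring
  have hsq : ‖z₁ + z₂‖ ^ 2 = r ^ 2 + s ^ 2 + 2 * (r * s * Real.cos θ) := by
    rw [show ‖z₁ + z₂‖ ^ 2 = Complex.normSq (z₁ + z₂) from Complex.sq_norm _,
      Complex.normSq_add, hre, ← Complex.sq_norm z₁, ← Complex.sq_norm z₂, ← hr_def, ← hs_def]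
  -- RHS nonneg
  have hπlt : Real.pi < 3.15 := Real.pi_lt_d2
  have hη2 : η ^ 2 ≤ 10 := by nlinarith
  have hRnn : 0 ≤ (1 - η ^ 2 / 8) * r + s := by nlinarith
  -- squares comparison
  have hsqle : ‖z₁ + z₂‖ ^ 2 ≤ ((1 - η ^ 2 / 8) * r + s) ^ 2 := by
    rw [hsq]
    nlinarith [mul_nonneg (mul_pos hr hs).le (sub_nonneg.2 hC),
      mul_nonneg (mul_nonneg (sub_nonneg.2 hle) hr.le)
        (by nlinarith : (0:ℝ) ≤ 2 * (η^2/8) - (η^2/8)^2)]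
  have habsnn : 0 ≤ ‖z₁ + z₂‖ := norm_nonneg _
  nlinarith [hsqle, habsnn, hRnn]
end

section
/- Let (C_n) be a sequence of sets in ℝ² with C_{n+1} ⊆ C_n, and suppose there exist constants C > 1 and 0 < r₁ ≤ r₂ < 1 such that C⁻¹·r₁^{m-k} ≤ diam(C_m)/diam(C_k) ≤ C·r₂^{m-k} for all m ≥ k. Fix x with x ∈ C_n for all n, and r > 0 with diam(C_0) ≥ r. Let n be minimal with C_n ⊆ B(x, r). Then diam(C_n) ≥ C⁻¹·r₁·r. -/
/-!
If `n = 0` the bound follows from `r ≤ diam C₀` and `K⁻¹ r₁ ≤ 1`. Otherwise minimality of `n`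
gives a point of `C_{n-1}` outside `B(x, r)`, so `r ≤ diam C_{n-1}` because `x ∈ C_{n-1}`, and the
lower comparability of consecutive diameters gives `K⁻¹ r₁ r ≤ K⁻¹ r₁ diam C_{n-1} ≤ diam C_n`.
-/

open Metric

namespace Metric

variable {α : Type*} [PseudoMetricSpace α]

theorem isBounded_of_diam_ne_zero {s : Set α} (h : diam s ≠ 0) : Bornology.IsBounded s := by
  by_contra hs
  exact h (diam_eq_zero_of_unbounded hs)

theorem diam_pos_of_le_diam_div {s t : Set α} {c : ℝ} (hc : 0 < c) (h : c ≤ diam t / diam s) :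
    0 < diam s := by
  refine diam_nonneg.lt_of_ne' fun h0 => ?_
  rw [h0, div_zero] at h
  linarith

theorem le_diam_of_not_subset_ball {s : Set α} {x : α} {r : ℝ} (hs : Bornology.IsBounded s)
    (hx : x ∈ s) (h : ¬s ⊆ ball x r) : r ≤ diam s := by
  obtain ⟨y, hy, hyr⟩ := Set.not_subset.mp h
  calc r ≤ dist y x := not_lt.mp hyr
    _ ≤ diam s := dist_le_diam_of_mem hs hy hx

end Metric

theorem stmt11_general (Cs : ℕ → Set (EuclideanSpace ℝ (Fin 2)))
    (K r₁ r₂ : ℝ) (hK : 1 < K) (hr₁ : 0 < r₁) (hr₁₂ : r₁ ≤ r₂) (hr₂ : r₂ < 1)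
    (hdiam : ∀ k m : ℕ, k ≤ m →
      K⁻¹ * r₁ ^ (m - k) ≤ Metric.diam (Cs m) / Metric.diam (Cs k) ∧
      Metric.diam (Cs m) / Metric.diam (Cs k) ≤ K * r₂ ^ (m - k))
    (x : EuclideanSpace ℝ (Fin 2)) (hx : ∀ n, x ∈ Cs n)
    (r : ℝ) (hr : 0 < r) (hr0 : r ≤ Metric.diam (Cs 0))
    (n : ℕ) (hmin : ∀ m < n, ¬ Cs m ⊆ Metric.ball x r) :
    K⁻¹ * r₁ * r ≤ Metric.diam (Cs n) := by
  have hK0 : 0 < K := one_pos.trans hK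
  cases n with
  | zero =>
    have hc : K⁻¹ * r₁ ≤ 1 :=
      mul_le_one₀ (inv_le_one_of_one_le₀ hK.le) hr₁.le (hr₁₂.trans hr₂.le)
    calc K⁻¹ * r₁ * r ≤ r := mul_le_of_le_one_left hr.le hc
      _ ≤ diam (Cs 0) := hr0
  | succ m =>
    have hstep := (hdiam m (m + 1) m.le_succ).1
    rw [Nat.add_sub_cancel_left, pow_one] at hstep
    have hpos : 0 < diam (Cs m) := diam_pos_of_le_diam_div (by positivity) hstep
    have hrm : r ≤ diam (Cs m) :=
      le_diam_of_not_subset_ball (isBounded_of_diam_ne_zero hpos.ne') (hx m) (hmin m m.lt_succ_self)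
    calc K⁻¹ * r₁ * r ≤ K⁻¹ * r₁ * diam (Cs m) := by gcongr
      _ ≤ diam (Cs (m + 1)) := (le_div_iff₀ hpos).1 hstep

theorem stmt11 (Cs : ℕ → Set (EuclideanSpace ℝ (Fin 2)))
    (hnest : ∀ n, Cs (n + 1) ⊆ Cs n)
    (K r₁ r₂ : ℝ) (hK : 1 < K) (hr₁ : 0 < r₁) (hr₁₂ : r₁ ≤ r₂) (hr₂ : r₂ < 1)
    (hdiam : ∀ k m : ℕ, k ≤ m →
      K⁻¹ * r₁ ^ (m - k) ≤ Metric.diam (Cs m) / Metric.diam (Cs k) ∧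
      Metric.diam (Cs m) / Metric.diam (Cs k) ≤ K * r₂ ^ (m - k))
    (x : EuclideanSpace ℝ (Fin 2)) (hx : ∀ n, x ∈ Cs n)
    (r : ℝ) (hr : 0 < r) (hr0 : r ≤ Metric.diam (Cs 0))
    (n : ℕ) (hn : Cs n ⊆ Metric.ball x r) (hmin : ∀ m < n, ¬ Cs m ⊆ Metric.ball x r) :
    K⁻¹ * r₁ * r ≤ Metric.diam (Cs n) :=
  stmt11_general Cs K r₁ r₂ hK hr₁ hr₁₂ hr₂ hdiam x hx r hr hr0 n hmin
end
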